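/- Let a > 0, t0 = (a+1)/a, θ̃ = (a+1)^2/(a^2+3a+1), τ̃ = a(a+1)/(a^2+3a+1), and let φ ∈ C([−1,0]) satisfy φ(t) < 0 on [−1,−θ̃), φ(−θ̃) = 0, φ(t) > 0 on (−θ̃,−τ̃), φ(−τ̃) = 0, φ(t) < 0 on (−τ̃,0), and φ(0) = 0. If x : [−1,∞) → ℝ is a solution of the relay equation ẋ(t) = R(x(t−1)) with initial function φ, then x(t) = y0(t) for all t ≥ 0, where y0 is the θ̃-periodic function with y0(t) = t on [0, 1−θ̃], y0(t) = −a(t − (1−θ̃)t0) on [1−θ̃, 1−τ̃], y0(t) = t − θ̃ on [1−τ̃, θ̃]. -/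

import Mathlib

/-!
Since `R` is piecewise constant, a solution is piecewise affine, its slope on `(t, t + dt)` being
decided by the sign of `x` on `(t - 1, t - 1 + dt)`. If on the window `(s - θ̃, s)` the solution is
positive and then nonpositive, switching sign at `s - τ̃`, and agrees with `y0` on
`[s, s + 1 - θ̃]`, then it has slope `-a` on `[s + 1 - θ̃, s + 1 - τ̃]` and slope `1` on
`[s + 1 - τ̃, s + 1]`, exactly as `y0` does; so it agrees with `y0` on `[s, s + 1]`, and since
`θ̃ < 1` that reproduces the same sign pattern on `(s, s + θ̃)`. The hypotheses on `φ` start this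
induction at `s = 0`, and it runs through `s = n θ̃` for all `n`.
-/

/-- The relay nonlinearity: `R a x = 1` if `x ≤ 0`, and `R a x = -a` if `x > 0`. -/
noncomputable def R (a x : ℝ) : ℝ := if x ≤ 0 then 1 else -a

/-- `x : [-1,∞) → ℝ` is a solution of the relay equation `x'(t) = R a (x (t-1))`
with initial function `φ ∈ C([-1,0])`: `x` is continuous on `[-1,∞)`, coincides
with `φ` on `[-1,0]`, and for every `t > 0` outside an exceptional set having
finitely many points in each bounded interval, `x` is differentiable at `t` with
`x'(t) = R a (x (t-1))`. -/
def IsSolution (a : ℝ) (φ x : ℝ → ℝ) : Prop :=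
  ContinuousOn x (Set.Ici (-1 : ℝ)) ∧
  (∀ t ∈ Set.Icc (-1 : ℝ) 0, x t = φ t) ∧
  ∃ S : Set ℝ, (∀ A B : ℝ, (S ∩ Set.Icc A B).Finite) ∧
    ∀ t : ℝ, 0 < t → t ∉ S → HasDerivAt x (R a (x (t - 1))) t

open Set Function

def AffineOnIcc (f : ℝ → ℝ) (c A B : ℝ) : Prop :=
  ∀ t ∈ Icc A B, f t = f A + c * (t - A)

lemma affineOnIcc_of_eq {f : ℝ → ℝ} {c K A B : ℝ} (hAB : A ≤ B)
    (h : ∀ t ∈ Icc A B, f t = c * (t - K)) : AffineOnIcc f c A B := by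
  intro t ht
  rw [h t ht, h A ⟨le_rfl, hAB⟩]
  ring

lemma affineOnIcc_of_hasDerivAt {f : ℝ → ℝ} {c A B : ℝ} {s : Set ℝ} (hs : s.Countable)
    (hf : ContinuousOn f (Icc A B)) (hd : ∀ t ∈ Ioo A B \ s, HasDerivAt f c t) :
    AffineOnIcc f c A B := by
  intro t ht
  have hFTC := MeasureTheory.integral_eq_of_hasDerivAt_off_countable_of_le f (fun _ ↦ c) ht.1
    hs (hf.mono (Icc_subset_Icc le_rfl ht.2))
    (fun u hu ↦ hd u ⟨⟨hu.1.1, hu.1.2.trans_le ht.2⟩, hu.2⟩) intervalIntegrable_const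
  rw [intervalIntegral.integral_const, smul_eq_mul] at hFTC
  linarith

lemma Function.Periodic.affineOnIcc_add {f : ℝ → ℝ} {s c A B : ℝ} (hf : Periodic f s)
    (h : AffineOnIcc f c A B) : AffineOnIcc f c (s + A) (s + B) := by
  intro t ht
  rw [← hf.sub_eq t, add_comm s A, hf A, h (t - s) ⟨by linarith [ht.1], by linarith [ht.2]⟩]
  ring

lemma Set.EqOn.extend_of_affineOnIcc {f g : ℝ → ℝ} {c A B C : ℝ} (hfg : EqOn f g (Icc A B))
    (hAB : A ≤ B) (hf : AffineOnIcc f c B C) (hg : AffineOnIcc g c B C) :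
    EqOn f g (Icc A C) := by
  intro t ht
  rcases le_total t B with htB | hBt
  · exact hfg ⟨ht.1, htB⟩
  · rw [hf t ⟨hBt, ht.2⟩, hg t ⟨hBt, ht.2⟩, hfg ⟨hAB, le_rfl⟩]

lemma countable_of_finite_inter_Icc {S : Set ℝ} (h : ∀ A B : ℝ, (S ∩ Icc A B).Finite) :
    S.Countable := by
  have hS : S = ⋃ n : ℕ, S ∩ Icc (-n : ℝ) n := by
    ext t
    simp only [mem_iUnion, mem_inter_iff, mem_Icc, ← abs_le, exists_and_left, iff_self_and]
    exact fun _ ↦ exists_nat_ge |t|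
  rw [hS]
  exact countable_iUnion fun n ↦ (h _ _).countable

lemma R_of_nonpos {a x : ℝ} (hx : x ≤ 0) : R a x = 1 := if_pos hx

lemma R_of_pos {a x : ℝ} (hx : 0 < x) : R a x = -a := if_neg hx.not_ge

def HasSignPattern (f : ℝ → ℝ) (θ τ s : ℝ) : Prop :=
  (∀ u ∈ Ioo (s - θ) (s - τ), 0 < f u) ∧ ∀ u ∈ Ioo (s - τ) s, f u ≤ 0

namespace HasSignPattern

variable {f g : ℝ → ℝ} {θ τ s : ℝ}

lemma congr (hg : HasSignPattern g θ τ s) (hτ : 0 ≤ τ) (hτθ : τ ≤ θ)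
    (hfg : EqOn f g (Ioo (s - θ) s)) : HasSignPattern f θ τ s := by
  refine ⟨fun u hu ↦ ?_, fun u hu ↦ ?_⟩
  · rw [hfg ⟨hu.1, by linarith [hu.2]⟩]
    exact hg.1 u hu
  · rw [hfg ⟨by linarith [hu.1], hu.2⟩]
    exact hg.2 u hu

lemma add_of_periodic (hf : HasSignPattern f θ τ s) {p : ℝ} (hper : Periodic f p) :
    HasSignPattern f θ τ (p + s) := by
  refine ⟨fun u hu ↦ ?_, fun u hu ↦ ?_⟩
  · rw [← hper.sub_eq u]
    exact hf.1 (u - p) ⟨by linarith [hu.1], by linarith [hu.2]⟩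
  · rw [← hper.sub_eq u]
    exact hf.2 (u - p) ⟨by linarith [hu.1], by linarith [hu.2]⟩

end HasSignPattern

namespace IsSolution

variable {a θ τ : ℝ} {φ x y0 : ℝ → ℝ}

lemma eqOn_initial (hx : IsSolution a φ x) : EqOn x φ (Icc (-1) 0) := hx.2.1

lemma affineOnIcc (hx : IsSolution a φ x) {c A B : ℝ} (hA : 0 ≤ A)
    (hR : ∀ u ∈ Ioo A B, R a (x (u - 1)) = c) : AffineOnIcc x c A B := by
  obtain ⟨hc, -, S, hS, hd⟩ := hx
  refine affineOnIcc_of_hasDerivAt (countable_of_finite_inter_Icc hS)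
    (hc.mono fun u hu ↦ ?_) fun u hu ↦ ?_
  · exact (show (-1 : ℝ) ≤ u by linarith [hu.1])
  · rw [← hR u hu.1]
    exact hd u (hA.trans_lt hu.1.1) hu.2

lemma eqOn_Icc_add_one (hx : IsSolution a φ x) (hθ1 : θ ≤ 1) (hτθ : τ ≤ θ) {s : ℝ}
    (hs : 0 ≤ s) (hper : Periodic y0 s) (hdec : AffineOnIcc y0 (-a) (1 - θ) (1 - τ))
    (hinc : AffineOnIcc y0 1 (1 - τ) 1) (heq : EqOn x y0 (Icc s (s + (1 - θ))))
    (hsign : HasSignPattern x θ τ s) : EqOn x y0 (Icc s (s + 1)) := by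
  have hxdec : AffineOnIcc x (-a) (s + (1 - θ)) (s + (1 - τ)) :=
    hx.affineOnIcc (by linarith) fun u hu ↦
      R_of_pos (hsign.1 (u - 1) ⟨by linarith [hu.1], by linarith [hu.2]⟩)
  have hxinc : AffineOnIcc x 1 (s + (1 - τ)) (s + 1) :=
    hx.affineOnIcc (by linarith) fun u hu ↦
      R_of_nonpos (hsign.2 (u - 1) ⟨by linarith [hu.1], by linarith [hu.2]⟩)
  have heq' : EqOn x y0 (Icc s (s + (1 - τ))) :=
    heq.extend_of_affineOnIcc (by linarith) hxdec (hper.affineOnIcc_add hdec)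
  exact heq'.extend_of_affineOnIcc (by linarith) hxinc (hper.affineOnIcc_add hinc)

theorem eqOn_Ici_of_hasSignPattern (hx : IsSolution a φ x) (hθ0 : 0 < θ) (hθ1 : θ ≤ 1)
    (hτ0 : 0 ≤ τ) (hτθ : τ ≤ θ) (hφneg : ∀ t ∈ Ico (-1) (-θ), φ t < 0) (hφ0 : φ 0 = 0)
    (hφ : HasSignPattern φ θ τ 0) (hper : Periodic y0 θ)
    (hy0a : ∀ t ∈ Icc 0 (1 - θ), y0 t = t)
    (hdec : AffineOnIcc y0 (-a) (1 - θ) (1 - τ)) (hinc : AffineOnIcc y0 1 (1 - τ) 1)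
    (hy0 : HasSignPattern y0 θ τ θ) : EqOn x y0 (Ici 0) := by
  have hbase : EqOn x y0 (Icc 0 (1 - θ)) := by
    have hx1 := hx.affineOnIcc (c := 1) (A := 0) (B := 1 - θ) le_rfl fun u hu ↦ by
      rw [hx.eqOn_initial ⟨by linarith [hu.1], by linarith [hu.2]⟩]
      exact R_of_nonpos (hφneg (u - 1) ⟨by linarith [hu.1], by linarith [hu.2]⟩).le
    intro t ht
    rw [hx1 t ht, hx.eqOn_initial ⟨by norm_num, le_rfl⟩, hφ0, hy0a t ht]
    ring
  have hperiod : ∀ n : ℕ,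
      EqOn x y0 (Icc (n * θ) (n * θ + (1 - θ))) ∧ HasSignPattern x θ τ (n * θ) := by
    intro n
    induction n with
    | zero =>
      rw [Nat.cast_zero, zero_mul, zero_add]
      exact ⟨hbase, hφ.congr hτ0 hτθ fun u hu ↦
        hx.eqOn_initial ⟨by linarith [hu.1], by linarith [hu.2]⟩⟩
    | succ n ih =>
      have h := hx.eqOn_Icc_add_one hθ1 hτθ (by positivity) (hper.nat_mul n) hdec hinc
        ih.1 ih.2
      rw [Nat.cast_succ, add_one_mul]
      exact ⟨h.mono (Icc_subset_Icc (by linarith) (by linarith)),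
        (hy0.add_of_periodic (hper.nat_mul n)).congr hτ0 hτθ
          (h.mono (Ioo_subset_Icc_self.trans (Icc_subset_Icc (by linarith) (by linarith))))⟩
  intro t ht
  set n := ⌊t / θ⌋₊
  have hn : n * θ ≤ t := (le_div_iff₀ hθ0).mp (Nat.floor_le (div_nonneg ht hθ0.le))
  have hn' : t < n * θ + θ := by
    have := (div_lt_iff₀ hθ0).mp (Nat.lt_floor_add_one (t / θ))
    linarith
  exact hx.eqOn_Icc_add_one hθ1 hτθ (by positivity) (hper.nat_mul n) hdec hinc
    (hperiod n).1 (hperiod n).2 ⟨hn, by linarith⟩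

end IsSolution

lemma tilde_params_bounds {a t0 θ τ : ℝ} (ha : 0 < a) (ht0 : t0 = (a + 1) / a)
    (hθ : θ = (a + 1) ^ 2 / (a ^ 2 + 3 * a + 1)) (hτ : τ = a * (a + 1) / (a ^ 2 + 3 * a + 1)) :
    0 < θ ∧ θ ≤ 1 ∧ 0 ≤ τ ∧ τ ≤ θ ∧ 1 - θ ≤ θ - τ ∧ 1 - τ ≤ θ ∧ (1 - θ) * t0 = θ - τ := by
  have hD : 0 < a ^ 2 + 3 * a + 1 := by positivity
  subst ht0 hθ hτ
  refine ⟨by positivity, ?_, by positivity, ?_, ?_, ?_, ?_⟩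
  · rw [div_le_one hD]
    nlinarith
  · gcongr
    nlinarith
  · rw [div_sub_div_same, one_sub_div hD.ne', div_le_div_iff_of_pos_right hD]
    nlinarith
  · rw [one_sub_div hD.ne', div_le_div_iff_of_pos_right hD]
    nlinarith
  · field_simp
    ring

section PeriodicSolution

variable {a θ τ t0 : ℝ} {y0 : ℝ → ℝ}

lemma y0_affineOnIcc_one (hper : Periodic y0 θ) (hθ1 : θ ≤ 1) (hτθ : 1 - τ ≤ θ)
    (hy0a : ∀ t ∈ Icc 0 (1 - θ), y0 t = t) (hy0c : ∀ t ∈ Icc (1 - τ) θ, y0 t = t - θ) :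
    AffineOnIcc y0 1 (1 - τ) 1 := by
  refine affineOnIcc_of_eq (K := θ) (by linarith) fun t ht ↦ ?_
  rcases le_total t θ with htθ | hθt
  · rw [hy0c t ⟨ht.1, htθ⟩, one_mul]
  · rw [← hper.sub_eq t, hy0a (t - θ) ⟨by linarith, by linarith [ht.2]⟩, one_mul]

lemma y0_hasSignPattern (ha : 0 < a) (hθ1 : θ ≤ 1) (hθτ : 1 - θ ≤ θ - τ)
    (hk : (1 - θ) * t0 = θ - τ) (hy0a : ∀ t ∈ Icc 0 (1 - θ), y0 t = t)
    (hy0b : ∀ t ∈ Icc (1 - θ) (1 - τ), y0 t = -a * (t - (1 - θ) * t0))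
    (hy0c : ∀ t ∈ Icc (1 - τ) θ, y0 t = t - θ) : HasSignPattern y0 θ τ θ := by
  refine ⟨fun u hu ↦ ?_, fun u hu ↦ ?_⟩
  · rcases le_total u (1 - θ) with h | h
    · rw [hy0a u ⟨by linarith [hu.1], h⟩]
      linarith [hu.1]
    · rw [hy0b u ⟨h, by linarith [hu.2]⟩, hk]
      nlinarith [hu.2]
  · rcases le_total u (1 - τ) with h | h
    · rw [hy0b u ⟨by linarith [hu.1], h⟩, hk]
      nlinarith [hu.1]
    · rw [hy0c u ⟨h, hu.2.le⟩]
      linarith [hu.2]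

end PeriodicSolution

theorem stmt_7_general (a : ℝ) (ha : 0 < a) (t0 θt τt : ℝ)
    (ht0 : t0 = (a + 1) / a)
    (hθt : θt = (a + 1) ^ 2 / (a ^ 2 + 3 * a + 1))
    (hτt : τt = a * (a + 1) / (a ^ 2 + 3 * a + 1))
    (φ : ℝ → ℝ)
    (hφ1 : ∀ t ∈ Set.Ico (-1 : ℝ) (-θt), φ t < 0)
    (hφ2 : ∀ t ∈ Set.Ioo (-θt) (-τt), 0 < φ t)
    (hφ3 : ∀ t ∈ Set.Ioo (-τt) (0 : ℝ), φ t < 0) (hφ0 : φ 0 = 0)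
    (x : ℝ → ℝ) (hx : IsSolution a φ x)
    (y0 : ℝ → ℝ)
    (hy0per : ∀ t : ℝ, y0 (t + θt) = y0 t)
    (hy0a : ∀ t ∈ Set.Icc (0 : ℝ) (1 - θt), y0 t = t)
    (hy0b : ∀ t ∈ Set.Icc (1 - θt) (1 - τt), y0 t = -a * (t - (1 - θt) * t0))
    (hy0c : ∀ t ∈ Set.Icc (1 - τt) θt, y0 t = t - θt) :
    ∀ t : ℝ, 0 ≤ t → x t = y0 t := by
  obtain ⟨hθ0, hθ1, hτ0, hτθ, hθτ, hτθ', hk⟩ := tilde_params_bounds ha ht0 hθt hτt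
  have hφ : HasSignPattern φ θt τt 0 :=
    ⟨fun u hu ↦ hφ2 u (by simpa using hu), fun u hu ↦ (hφ3 u (by simpa using hu)).le⟩
  exact fun t ht ↦ hx.eqOn_Ici_of_hasSignPattern hθ0 hθ1 hτ0 hτθ hφ1 hφ0 hφ hy0per hy0a
    (affineOnIcc_of_eq (by linarith) hy0b) (y0_affineOnIcc_one hy0per hθ1 hτθ' hy0a hy0c)
    (y0_hasSignPattern ha hθ1 hθτ hk hy0a hy0b hy0c) ht

/-- for `(θ,τ) = (θ̃,τ̃)`, a solution with an initial function having
zeros exactly at `-θ̃`, `-τ̃` and `0` (with the indicated signs in between)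
coincides for `t ≥ 0` with the `θ̃`-periodic function `y0`. -/
theorem stmt_7 (a : ℝ) (ha : 0 < a) (t0 θt τt : ℝ)
    (ht0 : t0 = (a + 1) / a)
    (hθt : θt = (a + 1) ^ 2 / (a ^ 2 + 3 * a + 1))
    (hτt : τt = a * (a + 1) / (a ^ 2 + 3 * a + 1))
    (φ : ℝ → ℝ) (hφc : ContinuousOn φ (Set.Icc (-1 : ℝ) 0))
    (hφ1 : ∀ t ∈ Set.Ico (-1 : ℝ) (-θt), φ t < 0) (hφθ : φ (-θt) = 0)
    (hφ2 : ∀ t ∈ Set.Ioo (-θt) (-τt), 0 < φ t) (hφτ : φ (-τt) = 0)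
    (hφ3 : ∀ t ∈ Set.Ioo (-τt) (0 : ℝ), φ t < 0) (hφ0 : φ 0 = 0)
    (x : ℝ → ℝ) (hx : IsSolution a φ x)
    (y0 : ℝ → ℝ)
    (hy0per : ∀ t : ℝ, y0 (t + θt) = y0 t)
    (hy0a : ∀ t ∈ Set.Icc (0 : ℝ) (1 - θt), y0 t = t)
    (hy0b : ∀ t ∈ Set.Icc (1 - θt) (1 - τt), y0 t = -a * (t - (1 - θt) * t0))
    (hy0c : ∀ t ∈ Set.Icc (1 - τt) θt, y0 t = t - θt) :
    ∀ t : ℝ, 0 ≤ t → x t = y0 t :=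
  stmt_7_general a ha t0 θt τt ht0 hθt hτt φ hφ1 hφ2 hφ3 hφ0 x hx y0 hy0per hy0a hy0b hy0c
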